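/- Consider the Watts–Strogatz mean-field system with inertia δ = 0 and suppose the Case-1 condition p·(α+β)·max{r, 1−r} < α holds. For every real c with 1/2 < c ≤ 1, the function θ(t) = (1−(1−c)e^{−t}, 1−(1−c)e^{−t}) is a solution of the system on [0, ∞) with θ^B(0) = θ^R(0) = c; that is, along this trajectory both indicator conditions g^B(θ(t)) > 0 and g^R(θ(t)) > 0 hold for all t ≥ 0 and both coordinates satisfy θ' = 1 − θ. -/

import Mathlib

open Set Filter

/-- `g^B(θ) = α(1−pr)(2θ^B−1) − βpr(2θ^R−1)`. -/
noncomputable def gB (α β p r θB θR : ℝ) : ℝ :=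
  α * (1 - p * r) * (2 * θB - 1) - β * p * r * (2 * θR - 1)

/-- `g^R(θ) = α(1−p(1−r))(2θ^R−1) − β(1−r)p(2θ^B−1)`. -/
noncomputable def gR (α β p r θB θR : ℝ) : ℝ :=
  α * (1 - p * (1 - r)) * (2 * θR - 1) - β * (1 - r) * p * (2 * θB - 1)

/-- Right-hand side of the blue equation:
`(1−θ^B)·𝟙[g^B(θ) > 0] − θ^B·𝟙[g^B(θ) < 0]`. -/
noncomputable def rhsB (α β p r θB θR : ℝ) : ℝ :=
  (1 - θB) * (if 0 < gB α β p r θB θR then 1 else 0)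
    - θB * (if gB α β p r θB θR < 0 then 1 else 0)

/-- Right-hand side of the red equation:
`(1−θ^R)·𝟙[g^R(θ) > 0] − θ^R·𝟙[g^R(θ) < 0]`. -/
noncomputable def rhsR (α β p r θB θR : ℝ) : ℝ :=
  (1 - θR) * (if 0 < gR α β p r θB θR then 1 else 0)
    - θR * (if gR α β p r θB θR < 0 then 1 else 0)

/-- `θ = (θ^B, θ^R)` is a solution of the Watts–Strogatz mean-field system
(with inertia `δ = 0`) on the set `J`: it is differentiable on `J` and satisfies
the two differential equations at every `t ∈ J`. -/
def IsWSSolutionOn (α β p r : ℝ) (θB θR : ℝ → ℝ) (J : Set ℝ) : Prop :=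
  ∀ t ∈ J,
    HasDerivWithinAt θB (rhsB α β p r (θB t) (θR t)) J t ∧
    HasDerivWithinAt θR (rhsR α β p r (θB t) (θR t)) J t

/-!
On the diagonal `θ^B = θ^R = x` both drift functions factor as
`g = (α − p s (α + β)) (2x − 1)` with `s = r` resp. `s = 1 − r`, and the Case-1 condition makes
both coefficients positive. The trajectory `1 − (1 − c) e^{−t} = e^{−t} c + (1 − e^{−t})` is a
convex combination of `c` and `1`, so it stays above `1/2`; hence both indicators equal `1`
along it and each coordinate only has to solve `θ' = 1 − θ`.
-/

open Real

theorem gB_diag (α β p r x : ℝ) :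
    gB α β p r x x = (α - p * r * (α + β)) * (2 * x - 1) := by
  unfold gB; ring

theorem gR_diag (α β p r x : ℝ) :
    gR α β p r x x = (α - p * (1 - r) * (α + β)) * (2 * x - 1) := by
  unfold gR; ring

section Case1

variable {α β p r x : ℝ}

theorem gB_diag_pos (hk : 0 ≤ p * (α + β)) (hcase : p * (α + β) * max r (1 - r) < α)
    (hx : 1 / 2 < x) : 0 < gB α β p r x x := by
  have hcoef : p * (α + β) * r < α :=
    (mul_le_mul_of_nonneg_left (le_max_left r (1 - r)) hk).trans_lt hcase
  rw [gB_diag]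
  exact mul_pos (by linarith) (by linarith)

theorem gR_diag_pos (hk : 0 ≤ p * (α + β)) (hcase : p * (α + β) * max r (1 - r) < α)
    (hx : 1 / 2 < x) : 0 < gR α β p r x x := by
  have hcoef : p * (α + β) * (1 - r) < α :=
    (mul_le_mul_of_nonneg_left (le_max_right r (1 - r)) hk).trans_lt hcase
  rw [gR_diag]
  exact mul_pos (by linarith) (by linarith)

end Case1

theorem rhsB_of_gB_pos {α β p r θB θR : ℝ} (h : 0 < gB α β p r θB θR) :
    rhsB α β p r θB θR = 1 - θB := by
  unfold rhsB
  rw [if_pos h, if_neg h.not_gt]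
  ring

theorem rhsR_of_gR_pos {α β p r θB θR : ℝ} (h : 0 < gR α β p r θB θR) :
    rhsR α β p r θB θR = 1 - θR := by
  unfold rhsR
  rw [if_pos h, if_neg h.not_gt]
  ring

theorem hasDerivAt_one_sub_mul_exp_neg (c t : ℝ) :
    HasDerivAt (fun t => 1 - (1 - c) * exp (-t)) (1 - (1 - (1 - c) * exp (-t))) t := by
  have hexp : HasDerivAt (fun t => exp (-t)) (-exp (-t)) t := by
    simpa using (hasDerivAt_neg t).exp
  exact ((hexp.const_mul (1 - c)).const_sub 1).congr_deriv (by ring)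

theorem lt_one_sub_mul_exp_neg {a c t : ℝ} (hac : a < c) (ha : a < 1) (ht : 0 ≤ t) :
    a < 1 - (1 - c) * exp (-t) := by
  have he0 : 0 < exp (-t) := exp_pos _
  have he1 : exp (-t) ≤ 1 := exp_le_one_iff.2 (neg_nonpos.2 ht)
  nlinarith [mul_pos he0 (sub_pos.2 hac), mul_nonneg (sub_nonneg.2 he1) (sub_pos.2 ha).le]

theorem ws_case1_explicit_trajectory_high_general
    (α β p r : ℝ)
    (hα : α ∈ Set.Icc (0:ℝ) 1) (hβ : β ∈ Set.Icc (0:ℝ) 1)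
    (hp : p ∈ Set.Icc (0:ℝ) 1)
    (hcase : p * (α + β) * max r (1 - r) < α)
    (c : ℝ) (hc1 : 1 / 2 < c) :
    (1 - (1 - c) * Real.exp (-(0:ℝ)) = c) ∧
    IsWSSolutionOn α β p r (fun t => 1 - (1 - c) * Real.exp (-t))
      (fun t => 1 - (1 - c) * Real.exp (-t)) (Set.Ici 0) ∧
    ∀ t ∈ Set.Ici (0:ℝ),
      0 < gB α β p r (1 - (1 - c) * Real.exp (-t)) (1 - (1 - c) * Real.exp (-t)) ∧
      0 < gR α β p r (1 - (1 - c) * Real.exp (-t)) (1 - (1 - c) * Real.exp (-t)) ∧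
      HasDerivWithinAt (fun t => 1 - (1 - c) * Real.exp (-t))
        (1 - (1 - (1 - c) * Real.exp (-t))) (Set.Ici 0) t := by
  have hk : 0 ≤ p * (α + β) := mul_nonneg hp.1 (add_nonneg hα.1 hβ.1)
  have hhalf (t : ℝ) (ht : t ∈ Ici (0:ℝ)) : 1 / 2 < 1 - (1 - c) * exp (-t) :=
    lt_one_sub_mul_exp_neg hc1 (by norm_num) ht
  have hgB (t : ℝ) (ht : t ∈ Ici (0:ℝ)) := gB_diag_pos (r := r) hk hcase (hhalf t ht)
  have hgR (t : ℝ) (ht : t ∈ Ici (0:ℝ)) := gR_diag_pos (r := r) hk hcase (hhalf t ht)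
  have hderiv (t : ℝ) := (hasDerivAt_one_sub_mul_exp_neg c t).hasDerivWithinAt (s := Ici 0)
  refine ⟨by simp, fun t ht => ⟨?_, ?_⟩, fun t ht => ⟨hgB t ht, hgR t ht, hderiv t⟩⟩
  · rw [rhsB_of_gB_pos (hgB t ht)]; exact hderiv t
  · rw [rhsR_of_gR_pos (hgR t ht)]; exact hderiv t

/-- Under the Case-1 condition `p(α+β)max{r,1−r} < α` and `1/2 < c ≤ 1`,
the function `θ(t) = (1−(1−c)e^{−t}, 1−(1−c)e^{−t})` is a solution of the system on
`[0,∞)` with `θ^B(0) = θ^R(0) = c`; along this trajectory both indicator conditions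
`g^B(θ(t)) > 0` and `g^R(θ(t)) > 0` hold for all `t ≥ 0` and both coordinates satisfy
`θ' = 1 − θ`. -/
theorem ws_case1_explicit_trajectory_high
    (α β p r : ℝ)
    (hα : α ∈ Set.Icc (0:ℝ) 1) (hβ : β ∈ Set.Icc (0:ℝ) 1)
    (hp : p ∈ Set.Icc (0:ℝ) 1) (hr : r ∈ Set.Ioo (0:ℝ) 1)
    (hcase : p * (α + β) * max r (1 - r) < α)
    (c : ℝ) (hc1 : 1 / 2 < c) (hc2 : c ≤ 1) :
    (1 - (1 - c) * Real.exp (-(0:ℝ)) = c) ∧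
    IsWSSolutionOn α β p r (fun t => 1 - (1 - c) * Real.exp (-t))
      (fun t => 1 - (1 - c) * Real.exp (-t)) (Set.Ici 0) ∧
    ∀ t ∈ Set.Ici (0:ℝ),
      0 < gB α β p r (1 - (1 - c) * Real.exp (-t)) (1 - (1 - c) * Real.exp (-t)) ∧
      0 < gR α β p r (1 - (1 - c) * Real.exp (-t)) (1 - (1 - c) * Real.exp (-t)) ∧
      HasDerivWithinAt (fun t => 1 - (1 - c) * Real.exp (-t))
        (1 - (1 - (1 - c) * Real.exp (-t))) (Set.Ici 0) t :=
  ws_case1_explicit_trajectory_high_general α β p r hα hβ hp hcase c hc1
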